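/- arXiv:2305.04659 — 3 statements merged into one kernel-verified Lean document; each statement's English description precedes it below -/
import Mathlib

section
/- Let φ be a commutation factor on an abelian group G. Define κ : G × G → kˣ by κ(g,h) = -1 if φ(g,g) = φ(h,h) = -1 and κ(g,h) = 1 otherwise. Then κ is a commutation factor, and the pointwise product φκ is a commutation factor satisfying (φκ)(g,g) = 1 for all g ∈ G. -/
open scoped Classical

theorem stmt_5 {G K : Type*} [CommGroup G] [Field K] (hchar : ringChar K ≠ 2)
    (φ : G → G → Kˣ)
    (h1 : ∀ g h l : G, φ (g * h) l = φ g l * φ h l)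
    (h2 : ∀ g h l : G, φ g (h * l) = φ g h * φ g l)
    (hskew : ∀ g h : G, φ g h * φ h g = 1)
    (κ : G → G → Kˣ)
    (hκ : ∀ g h : G, κ g h = if φ g g = -1 ∧ φ h h = -1 then -1 else 1) :
    ((∀ g h l : G, κ (g * h) l = κ g l * κ h l) ∧
      (∀ g h l : G, κ g (h * l) = κ g h * κ g l) ∧
      (∀ g h : G, κ g h * κ h g = 1)) ∧
    ((∀ g h l : G, φ (g * h) l * κ (g * h) l = (φ g l * κ g l) * (φ h l * κ h l)) ∧
      (∀ g h l : G, φ g (h * l) * κ g (h * l) = (φ g h * κ g h) * (φ g l * κ g l)) ∧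
      (∀ g h : G, (φ g h * κ g h) * (φ h g * κ h g) = 1) ∧
      (∀ g : G, φ g g * κ g g = 1)) := by
  have hne : (-1 : Kˣ) ≠ 1 := by
    intro h
    have h' : (-1 : K) = 1 := by
      have := congrArg Units.val h; simpa using this
    exact Ring.neg_one_ne_one_of_char_ne_two hchar h'
  have hsq : ∀ g : G, φ g g = 1 ∨ φ g g = -1 := by
    intro g
    have h := hskew g g
    have : ((φ g g : K)) * (φ g g : K) = 1 := by
      rw [← Units.val_mul, h, Units.val_one]
    rcases mul_self_eq_one_iff.mp this with h' | h'
    · left; ext; exact h'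
    · right; ext; simpa using h'
  have hmul : ∀ g h : G, φ (g * h) (g * h) = φ g g * φ h h := by
    intro g h
    rw [h1, h2, h2]
    have := hskew g h
    calc φ g g * φ g h * (φ h g * φ h h)
        = (φ g h * φ h g) * (φ g g * φ h h) := by simp [mul_comm, mul_assoc, mul_left_comm]
      _ = φ g g * φ h h := by rw [this, one_mul]
  have hκmul1 : ∀ g h l : G, κ (g * h) l = κ g l * κ h l := by
    intro g h l
    rw [hκ, hκ, hκ, hmul]
    rcases hsq g with hg | hg <;> rcases hsq h with hh | hh <;>
      rcases hsq l with hl | hl <;>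
      simp [hg, hh, hl, hne, hne.symm]
  have hκsymm : ∀ g h : G, κ g h = κ h g := by
    intro g h; rw [hκ, hκ]; simp [and_comm]
  have hκmul2 : ∀ g h l : G, κ g (h * l) = κ g h * κ g l := by
    intro g h l
    rw [hκsymm g (h*l), hκsymm g h, hκsymm g l]
    exact hκmul1 h l g
  have hκself : ∀ g h : G, κ g h * κ h g = 1 := by
    intro g h
    rw [← hκsymm, hκ]
    split <;> simp
  refine ⟨⟨hκmul1, hκmul2, hκself⟩, ?_, ?_, ?_, ?_⟩
  · intro g h l; rw [h1, hκmul1]; exact mul_mul_mul_comm _ _ _ _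
  · intro g h l; rw [h2, hκmul2]; exact mul_mul_mul_comm _ _ _ _
  · intro g h
    calc (φ g h * κ g h) * (φ h g * κ h g)
        = (φ g h * φ h g) * (κ g h * κ h g) := by simp [mul_comm, mul_assoc, mul_left_comm]
      _ = 1 := by rw [hskew, hκself, one_mul]
  · intro g
    rcases hsq g with hg | hg <;> rw [hκ, hg] <;> simp [hne, hne.symm]
end

section
/- Let f, g : A → B be morphisms of cocommutative Hopf algebras over a field k. Then the equalizer of f and g in the category of cocommutative Hopf algebras is the Hopf subalgebra Eq(f,g) = {x ∈ A | x₁ ⊗ f(x₂) = x₁ ⊗ g(x₂)} with its inclusion into A; in particular Eq(f,g) is closed under Δ, multiplication, unit, and antipode, and every element of it satisfies f(x) = g(x). -/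
/-!
Write `φ = (id ⊗ (f - g)) ∘ Δ`, so that `Eq(f, g) = ker φ`. Since `Δ` and `id ⊗ f` are algebra
maps, `ker φ` is closed under products, and `ε ⊗ id` turns `x₁ ⊗ f x₂ = x₁ ⊗ g x₂` into
`f x = g x`. Uniqueness of convolution inverses shows that bialgebra maps commute with the
antipode and that `Δ ∘ S = (S ⊗ S) ∘ τ ∘ Δ`, where `τ` is the flip (both sides invert `Δ`, which is
the convolution product of the two inclusions `A → A ⊗ A`); under cocommutativity this makes
`ker φ` stable under `S`.
For closure under `Δ`, coassociativity gives `(id ⊗ φ) (Δ x) = 0` and cocommutativity then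
`(φ ⊗ id) (Δ x) = 0`; over a field, `ker (id ⊗ φ) ∩ ker (φ ⊗ id) = ker φ ⊗ ker φ` by flatness.
-/

open TensorProduct Coalgebra HopfAlgebra WithConv

namespace TensorProduct

variable {R M N P Q : Type*} [CommRing R] [AddCommGroup M] [Module R M] [AddCommGroup N]
  [Module R N] [AddCommGroup P] [Module R P] [AddCommGroup Q] [Module R Q]

lemma mem_range_mapIncl_ker_of_lTensor_eq_zero_of_rTensor_eq_zero (φ : M →ₗ[R] P) (ψ : N →ₗ[R] Q)
    [Module.Flat R M] [Module.Flat R P] [Module.Flat R (LinearMap.ker ψ)] {t : M ⊗[R] N}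
    (hψ : ψ.lTensor M t = 0) (hφ : φ.rTensor N t = 0) :
    t ∈ LinearMap.range (mapIncl (LinearMap.ker φ) (LinearMap.ker ψ)) := by
  obtain ⟨v, rfl⟩ :=
    (Module.Flat.lTensor_exact M (LinearMap.exact_subtype_ker_map ψ) t).mp hψ
  have hv : φ.rTensor (LinearMap.ker ψ) v = 0 := by
    apply Module.Flat.lTensor_preserves_injective_linearMap (M := P) _
      (LinearMap.ker ψ).injective_subtype
    rw [map_zero, ← LinearMap.comp_apply, LinearMap.lTensor_comp_rTensor,
      ← LinearMap.rTensor_comp_lTensor, LinearMap.comp_apply, hφ]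
  obtain ⟨w, rfl⟩ :=
    (Module.Flat.rTensor_exact (LinearMap.ker ψ) (LinearMap.exact_subtype_ker_map φ) v).mp hv
  exact ⟨w, by rw [mapIncl, ← LinearMap.lTensor_comp_rTensor, LinearMap.comp_apply]⟩

end TensorProduct

namespace Coalgebra

variable {R C A B : Type*} [CommSemiring R] [AddCommMonoid C] [Module R C] [Coalgebra R C]

section Convolution

variable [Semiring A] [Algebra R A] [Semiring B] [Algebra R B]

open Algebra.TensorProduct

lemma includeLeft_convMul_includeRight (u : C →ₗ[R] A) (v : C →ₗ[R] B) :
    toConv ((includeLeft : A →ₐ[R] A ⊗[R] B).toLinearMap ∘ₗ u) *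
        toConv ((includeRight : B →ₐ[R] A ⊗[R] B).toLinearMap ∘ₗ v) =
      toConv (map u v ∘ₗ comul) := by
  ext c
  simp [(ℛ R c).convMul_apply, ← (ℛ R c).eq]

lemma includeRight_convMul_includeLeft (u : C →ₗ[R] A) (v : C →ₗ[R] B) :
    toConv ((includeRight : B →ₐ[R] A ⊗[R] B).toLinearMap ∘ₗ v) *
        toConv ((includeLeft : A →ₐ[R] A ⊗[R] B).toLinearMap ∘ₗ u) =
      toConv (map u v ∘ₗ (TensorProduct.comm R C C).toLinearMap ∘ₗ comul) := by
  ext c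
  simp [(ℛ R c).convMul_apply, ← (ℛ R c).eq]

end Convolution

variable [AddCommMonoid B] [Module R B]

lemma lTensor_lTensor_comp_comul_comul (d : C →ₗ[R] B) (x : C) :
    (d.lTensor C ∘ₗ comul).lTensor C (comul x) =
      _root_.TensorProduct.assoc R C C B (comul.rTensor B (d.lTensor C (comul x))) := by
  rw [LinearMap.lTensor_comp, LinearMap.comp_apply, ← coassoc_apply]
  calc (d.lTensor C).lTensor C (_root_.TensorProduct.assoc R C C C (comul.rTensor C (comul x)))
      = _root_.TensorProduct.assoc R C C B (d.lTensor (C ⊗[R] C) (comul.rTensor C (comul x))) := by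
        simp [LinearMap.lTensor_tensor]
    _ = _root_.TensorProduct.assoc R C C B (comul.rTensor B (d.lTensor C (comul x))) := by
        rw [← LinearMap.comp_apply (d.lTensor _), ← LinearMap.comp_apply (comul.rTensor B),
          LinearMap.lTensor_comp_rTensor, LinearMap.rTensor_comp_lTensor]

end Coalgebra

namespace HopfAlgebra

variable {R A B : Type*} [CommSemiring R] [Semiring A] [Semiring B] [HopfAlgebra R A]

lemma algHom_comp_antipode_convMul [Algebra R B] (h : A →ₐ[R] B) :
    toConv (h.toLinearMap ∘ₗ antipode R) * toConv h.toLinearMap = 1 := by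
  have := LinearMap.algHom_comp_convMul_distrib h (toConv (antipode R)) (toConv .id)
  rw [LinearMap.antipode_mul_id] at this
  ext a
  simpa using congr($this a).symm

lemma coalgHom_convMul_antipode_comp [HopfAlgebra R B] (h : A →ₗc[R] B) :
    toConv h.toLinearMap * toConv (antipode R ∘ₗ h.toLinearMap) = 1 := by
  have := LinearMap.convMul_comp_coalgHom_distrib (toConv .id) (toConv (antipode R)) h
  rw [LinearMap.id_mul_antipode] at this
  ext a
  simpa using congr($this a).symm

open Algebra.TensorProduct in
lemma comul_comp_antipode :
    comul ∘ₗ antipode R =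
      map (antipode R) (antipode R) ∘ₗ (TensorProduct.comm R A A).toLinearMap ∘ₗ
        comul (A := A) := by
  set iL := (includeLeft : A →ₐ[R] A ⊗[R] A)
  set iR := (includeRight : A →ₐ[R] A ⊗[R] A)
  have hcomul : toConv (comul (R := R) (A := A)) =
      toConv (iL.toLinearMap ∘ₗ .id) * toConv (iR.toLinearMap ∘ₗ .id) := by
    rw [includeLeft_convMul_includeRight, TensorProduct.map_id, LinearMap.id_comp]
  have hleft : toConv (map (antipode R) (antipode R) ∘ₗ
      (TensorProduct.comm R A A).toLinearMap ∘ₗ comul (A := A)) * toConv comul = 1 := by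
    rw [← includeRight_convMul_includeLeft, hcomul, mul_assoc,
      ← mul_assoc (toConv (iL.toLinearMap ∘ₗ _)), LinearMap.comp_id,
      algHom_comp_antipode_convMul, one_mul, LinearMap.comp_id, algHom_comp_antipode_convMul]
  exact congrArg ofConv (left_inv_eq_right_inv hleft LinearMap.comul_right_inv).symm

lemma comul_antipode [IsCocomm R A] (a : A) :
    comul (antipode R a) = map (antipode R) (antipode R) (comul a) := by
  simpa using congr($(comul_comp_antipode (R := R) (A := A)) a)

end HopfAlgebra

lemma BialgHom.toLinearMap_comp_antipode {R A B : Type*} [CommSemiring R] [Semiring A]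
    [Semiring B] [HopfAlgebra R A] [HopfAlgebra R B] (f : A →ₐc[R] B) :
    (f : A →ₗ[R] B) ∘ₗ antipode R = antipode R ∘ₗ (f : A →ₗ[R] B) :=
  congrArg ofConv <| left_inv_eq_right_inv
    (algHom_comp_antipode_convMul (f : A →ₐ[R] B))
    (coalgHom_convMul_antipode_comp (f : A →ₗc[R] B))

namespace BialgHom

variable {R A B : Type*} [CommRing R] [Ring A] [Ring B]

section Bialgebra

variable [Bialgebra R A] [Bialgebra R B]

def equalizer (f g : A →ₐc[R] B) : Submodule R A :=
  LinearMap.ker (((f : A →ₗ[R] B) - (g : A →ₗ[R] B)).lTensor A ∘ₗ comul)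

variable {f g : A →ₐc[R] B}

lemma mem_equalizer {x : A} :
    x ∈ equalizer f g ↔
      (f : A →ₗ[R] B).lTensor A (comul x) = (g : A →ₗ[R] B).lTensor A (comul x) := by
  simp [equalizer, LinearMap.lTensor_sub, sub_eq_zero]

lemma lTensor_mul (u v : A ⊗[R] A) :
    (f : A →ₗ[R] B).lTensor A (u * v) =
      (f : A →ₗ[R] B).lTensor A u * (f : A →ₗ[R] B).lTensor A v := by
  have : (f : A →ₗ[R] B).lTensor A =
      (Algebra.TensorProduct.map (AlgHom.id R A) (f : A →ₐ[R] B)).toLinearMap := by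
    ext; simp
  rw [this, AlgHom.toLinearMap_apply, AlgHom.toLinearMap_apply, AlgHom.toLinearMap_apply]
  exact map_mul _ u v

lemma one_mem_equalizer : (1 : A) ∈ equalizer f g := by
  simp [mem_equalizer, Algebra.TensorProduct.one_def]

lemma mul_mem_equalizer {x y : A} (hx : x ∈ equalizer f g) (hy : y ∈ equalizer f g) :
    x * y ∈ equalizer f g := by
  rw [mem_equalizer] at *
  rw [Bialgebra.comul_mul, lTensor_mul, lTensor_mul, hx, hy]

lemma apply_eq_of_mem_equalizer {x : A} (hx : x ∈ equalizer f g) : f x = g x := by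
  have counit_lTensor (p : A →ₗ[R] B) :
      TensorProduct.lid R B (counit.rTensor B (p.lTensor A (comul x))) = p x := by
    rw [← LinearMap.comp_apply (LinearMap.rTensor B counit), LinearMap.rTensor_comp_lTensor,
      ← LinearMap.lTensor_comp_rTensor, LinearMap.comp_apply, rTensor_counit_comul]
    simp
  simpa [counit_lTensor] using
    congr(TensorProduct.lid R B (counit.rTensor B $(mem_equalizer.mp hx)))

lemma apply_mem_equalizer {C F : Type*} [AddCommMonoid C] [Module R C] [Coalgebra R C]
    [FunLike F C A] [CoalgHomClass F R C A] (h : F) (hfg : ∀ c, f (h c) = g (h c)) (c : C) :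
    h c ∈ equalizer f g := by
  have : (f : A →ₗ[R] B) ∘ₗ (h : C →ₗ[R] A) = (g : A →ₗ[R] B) ∘ₗ (h : C →ₗ[R] A) :=
    LinearMap.ext hfg
  rw [mem_equalizer, ← CoalgHomClass.map_comp_comul_apply h c, LinearMap.lTensor_map,
    LinearMap.lTensor_map, this]

end Bialgebra

variable [HopfAlgebra R A] [HopfAlgebra R B] [IsCocomm R A] {f g : A →ₐc[R] B}

lemma antipode_mem_equalizer {x : A} (hx : x ∈ equalizer f g) :
    antipode R x ∈ equalizer f g := by
  rw [mem_equalizer] at *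
  simp only [comul_antipode, LinearMap.lTensor_map, toLinearMap_comp_antipode,
    ← LinearMap.map_comp_lTensor, LinearMap.comp_apply, hx]

lemma comul_mem_range_mapIncl_equalizer [Module.Flat R A] [Module.Flat R (A ⊗[R] B)]
    [Module.Flat R (equalizer f g)] {x : A} (hx : x ∈ equalizer f g) :
    comul x ∈ LinearMap.range (mapIncl (equalizer f g) (equalizer f g)) := by
  set d := (f : A →ₗ[R] B) - (g : A →ₗ[R] B)
  have hx' : d.lTensor A (comul x) = 0 := hx
  have hl : (d.lTensor A ∘ₗ comul).lTensor A (comul x) = 0 := by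
    rw [lTensor_lTensor_comp_comul_comul, hx', map_zero, map_zero]
  have hr : (d.lTensor A ∘ₗ comul).rTensor A (comul x) = 0 := by
    rw [← comm_comul R x, LinearMap.rTensor_comm, hl, map_zero]
  have : Module.Flat R (LinearMap.ker (d.lTensor A ∘ₗ comul)) := ‹Module.Flat R (equalizer f g)›
  exact mem_range_mapIncl_ker_of_lTensor_eq_zero_of_rTensor_eq_zero _ _ hl hr

end BialgHom

theorem stmt_11_general {k A B : Type u} [Field k] [Ring A] [Ring B]
    [HopfAlgebra k A] [HopfAlgebra k B]
    (hcocA : ∀ x : A, (TensorProduct.comm k A A) (Coalgebra.comul (R := k) x) =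
      Coalgebra.comul (R := k) x)
    (f g : A →ₐc[k] B)
    (E : Set A)
    (hE : E = {x : A | LinearMap.lTensor A (f : A →ₗ[k] B) (Coalgebra.comul (R := k) x) =
      LinearMap.lTensor A (g : A →ₗ[k] B) (Coalgebra.comul (R := k) x)}) :
    (1 : A) ∈ E ∧
    (∀ x ∈ E, ∀ y ∈ E, x * y ∈ E) ∧
    (∀ x ∈ E, HopfAlgebra.antipode (R := k) x ∈ E) ∧
    (∀ x ∈ E, Coalgebra.comul (R := k) x ∈
      Submodule.span k {z : A ⊗[k] A | ∃ a ∈ E, ∃ b ∈ E, z = a ⊗ₜ[k] b}) ∧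
    (∀ x ∈ E, f x = g x) ∧
    (∀ (C : Type u) (_ : Ring C) (_ : HopfAlgebra k C),
      (∀ x : C, (TensorProduct.comm k C C) (Coalgebra.comul (R := k) x) =
        Coalgebra.comul (R := k) x) →
      ∀ h : C →ₐc[k] A, (∀ c : C, f (h c) = g (h c)) → ∀ c : C, h c ∈ E) := by
  have : IsCocomm k A := ⟨LinearMap.ext hcocA⟩
  obtain rfl : E = f.equalizer g := by
    rw [hE]
    exact Set.ext fun _ ↦ BialgHom.mem_equalizer.symm
  refine ⟨BialgHom.one_mem_equalizer, fun x hx y hy ↦ BialgHom.mul_mem_equalizer hx hy,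
    fun x hx ↦ BialgHom.antipode_mem_equalizer hx, fun x hx ↦ ?_,
    fun x hx ↦ BialgHom.apply_eq_of_mem_equalizer hx,
    fun C _ _ _ h hfg ↦ BialgHom.apply_mem_equalizer h hfg⟩
  have hΔ := BialgHom.comul_mem_range_mapIncl_equalizer hx
  rw [range_mapIncl, Submodule.map₂_eq_span_image2] at hΔ
  exact Submodule.span_mono (by rintro _ ⟨a, ha, b, hb, rfl⟩; exact ⟨a, ha, b, hb, rfl⟩) hΔ

theorem stmt_11 {k A B : Type u} [Field k] [Ring A] [Ring B]
    [HopfAlgebra k A] [HopfAlgebra k B]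
    (hcocA : ∀ x : A, (TensorProduct.comm k A A) (Coalgebra.comul (R := k) x) =
      Coalgebra.comul (R := k) x)
    (hcocB : ∀ x : B, (TensorProduct.comm k B B) (Coalgebra.comul (R := k) x) =
      Coalgebra.comul (R := k) x)
    (f g : A →ₐc[k] B)
    (E : Set A)
    (hE : E = {x : A | LinearMap.lTensor A (f : A →ₗ[k] B) (Coalgebra.comul (R := k) x) =
      LinearMap.lTensor A (g : A →ₗ[k] B) (Coalgebra.comul (R := k) x)}) :
    (1 : A) ∈ E ∧
    (∀ x ∈ E, ∀ y ∈ E, x * y ∈ E) ∧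
    (∀ x ∈ E, HopfAlgebra.antipode (R := k) x ∈ E) ∧
    (∀ x ∈ E, Coalgebra.comul (R := k) x ∈
      Submodule.span k {z : A ⊗[k] A | ∃ a ∈ E, ∃ b ∈ E, z = a ⊗ₜ[k] b}) ∧
    (∀ x ∈ E, f x = g x) ∧
    (∀ (C : Type u) (_ : Ring C) (_ : HopfAlgebra k C),
      (∀ x : C, (TensorProduct.comm k C C) (Coalgebra.comul (R := k) x) =
        Coalgebra.comul (R := k) x) →
      ∀ h : C →ₐc[k] A, (∀ c : C, f (h c) = g (h c)) → ∀ c : C, h c ∈ E) :=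
  stmt_11_general hcocA f g E hE
end

section
/- Let f : A → C be a morphism of cocommutative Hopf algebras over a field k, and let HKer(f) = {x ∈ A | x₁ ⊗ f(x₂) = x ⊗ 1_C} be its Hopf kernel. Then HKer(f) is a normal Hopf subalgebra of A: for all a ∈ A and x ∈ HKer(f), the element a₁ x S(a₂) lies in HKer(f). -/
open TensorProduct

/-- The adjoint action `a ⊗ x ↦ a₁ x S(a₂)` of a Hopf algebra on itself. -/
noncomputable def adjointAction (k H : Type u) [Field k] [Ring H] [HopfAlgebra k H] :
    H ⊗[k] H →ₗ[k] H :=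
  LinearMap.mul' k H ∘ₗ
    TensorProduct.map (LinearMap.mul' k H) (HopfAlgebra.antipode (R := k)) ∘ₗ
    (TensorProduct.assoc k H H H).symm.toLinearMap ∘ₗ
    LinearMap.lTensor H (TensorProduct.comm k H H).toLinearMap ∘ₗ
    (TensorProduct.assoc k H H H).toLinearMap ∘ₗ
    LinearMap.rTensor H (Coalgebra.comul (R := k) (A := H))

/-- A subspace of a Hopf algebra is a Hopf subalgebra if it contains `1`, is closed under
multiplication and the antipode, and its comultiplication lands in (the image of) `S ⊗ S`. -/
def IsHopfSubalgebra {k H : Type u} [Field k] [Ring H] [HopfAlgebra k H]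
    (S : Submodule k H) : Prop :=
  (1 : H) ∈ S ∧ (∀ x ∈ S, ∀ y ∈ S, x * y ∈ S) ∧
  (∀ x ∈ S, Coalgebra.comul (R := k) x ∈
    Submodule.span k {z : H ⊗[k] H | ∃ a ∈ S, ∃ b ∈ S, z = a ⊗ₜ[k] b}) ∧
  (∀ x ∈ S, HopfAlgebra.antipode (R := k) x ∈ S)

/-- A Hopf subalgebra is normal when it is closed under the adjoint action. -/
def IsNormalHopfSubalgebra {k H : Type u} [Field k] [Ring H] [HopfAlgebra k H]
    (S : Submodule k H) : Prop :=
  IsHopfSubalgebra S ∧ ∀ a : H, ∀ x ∈ S, adjointAction k H (a ⊗ₜ[k] x) ∈ S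


/-!
Work in the convolution monoid of linear maps `A → A ⊗ C`. The coaction `ψ(a) = a₁ ⊗ f(a₂)` is
the convolution product `φ * θ` of the algebra maps `φ(a) = a ⊗ 1` and `θ(a) = 1 ⊗ f(a)`, and every
algebra map `g` has convolution inverse `g ∘ S`. As `ψ` is multiplicative, `ψ(a₁ x S(a₂))` is
`((ψ · z) * ψ⁻¹)(a)` with `z = ψ(x)`. For `x` in the Hopf kernel, `z = x ⊗ 1` commutes with every
value of `θ`, so `(ψ · z) * ψ⁻¹ = φ * (θ · z) * θ⁻¹ * φ⁻¹ = (φ · z) * θ * θ⁻¹ * φ⁻¹ = (φ · z) * φ⁻¹`,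
which is `φ(a₁ x S(a₂)) = a₁ x S(a₂) ⊗ 1`.
-/

open Coalgebra HopfAlgebra WithConv

namespace LinearMap

section Coalgebra

variable {k A B : Type*} [CommSemiring k] [AddCommMonoid A] [Module k A] [CoalgebraStruct k A]
  [Semiring B] [Algebra k B]

lemma mulRight_comp_convMul (z : B) (T U : WithConv (A →ₗ[k] B)) :
    toConv (mulRight k z ∘ₗ (T * U).ofConv) = T * toConv (mulRight k z ∘ₗ U.ofConv) := by
  ext a
  simp [(ℛ k a).convMul_apply, mul_assoc]

lemma mulRight_comp_convMul_eq_convMul_mulLeft_comp (z : B) (T U : WithConv (A →ₗ[k] B)) :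
    toConv (mulRight k z ∘ₗ T.ofConv) * U = T * toConv (mulLeft k z ∘ₗ U.ofConv) := by
  ext a
  simp [(ℛ k a).convMul_apply, mul_assoc]

end Coalgebra

section HopfAlgebra

variable {k A B : Type*} [CommSemiring k] [Semiring A] [HopfAlgebra k A] [Semiring B] [Algebra k B]

lemma algHom_comp_convMul_comp_antipode (g : A →ₐ[k] B) :
    toConv g.toLinearMap * toConv (g.toLinearMap ∘ₗ antipode k) = 1 := by
  have h := algHom_comp_convMul_distrib g (toConv id) (toConv (antipode k))
  rw [id_mul_antipode] at h
  ext a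
  simpa using congr($h a).symm

lemma algHom_comp_antipode_convMul (g : A →ₐ[k] B) :
    toConv (g.toLinearMap ∘ₗ antipode k) * toConv g.toLinearMap = 1 := by
  have h := algHom_comp_convMul_distrib g (toConv (antipode k)) (toConv id)
  rw [antipode_mul_id] at h
  ext a
  simpa using congr($h a).symm

lemma algHom_comp_adjoint (g : A →ₐ[k] B) (x : A) :
    toConv (g.toLinearMap ∘ₗ (toConv (mulRight k x) * toConv (antipode k)).ofConv) =
      toConv (mulRight k (g x) ∘ₗ g.toLinearMap) * toConv (g.toLinearMap ∘ₗ antipode k) := by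
  have hg : g.toLinearMap ∘ₗ mulRight k x = mulRight k (g x) ∘ₗ g.toLinearMap := by ext; simp
  rw [algHom_comp_convMul_distrib, hg, toConv_ofConv]

theorem algHom_adjoint_eq_of_convMul_eq {φ θ ψ : A →ₐ[k] B}
    (hψ : toConv ψ.toLinearMap = toConv φ.toLinearMap * toConv θ.toLinearMap) {x : A}
    (hx : ψ x = φ x) (hcomm : ∀ a, Commute (φ x) (θ a)) (a : A) :
    ψ ((toConv (mulRight k x) * toConv (antipode k (A := A))).ofConv a) =
      φ ((toConv (mulRight k x) * toConv (antipode k (A := A))).ofConv a) := by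
  have hθ : toConv (mulRight k (φ x) ∘ₗ θ.toLinearMap) =
      toConv (mulLeft k (φ x) ∘ₗ θ.toLinearMap) := by
    ext a
    exact (hcomm a).symm.eq
  have hθψ : toConv θ.toLinearMap * toConv (ψ.toLinearMap ∘ₗ antipode k) =
      toConv (φ.toLinearMap ∘ₗ antipode k) :=
    calc _ = toConv (φ.toLinearMap ∘ₗ antipode k) * toConv φ.toLinearMap * toConv θ.toLinearMap *
          toConv (ψ.toLinearMap ∘ₗ antipode k) := by
          rw [algHom_comp_antipode_convMul, one_mul]
      _ = toConv (φ.toLinearMap ∘ₗ antipode k) *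
          (toConv ψ.toLinearMap * toConv (ψ.toLinearMap ∘ₗ antipode k)) := by
          rw [mul_assoc _ (toConv φ.toLinearMap), ← hψ, mul_assoc]
      _ = _ := by rw [algHom_comp_convMul_comp_antipode, mul_one]
  suffices h : toConv (ψ.toLinearMap ∘ₗ (toConv (mulRight k x) * toConv (antipode k)).ofConv) =
      toConv (φ.toLinearMap ∘ₗ (toConv (mulRight k x) * toConv (antipode k)).ofConv) from
    congr(ofConv $h a)
  calc _ = toConv (mulRight k (φ x) ∘ₗ (toConv φ.toLinearMap * toConv θ.toLinearMap).ofConv) *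
        toConv (ψ.toLinearMap ∘ₗ antipode k) := by
        rw [algHom_comp_adjoint, hx, ← hψ, toConv_ofConv]
    _ = toConv (mulRight k (φ x) ∘ₗ φ.toLinearMap) *
        (toConv θ.toLinearMap * toConv (ψ.toLinearMap ∘ₗ antipode k)) := by
        rw [mulRight_comp_convMul, hθ, ← mulRight_comp_convMul_eq_convMul_mulLeft_comp, mul_assoc]
    _ = _ := by
        rw [hθψ, ← algHom_comp_adjoint]

end HopfAlgebra

end LinearMap

lemma adjointAction_tmul {k H : Type u} [Field k] [Ring H] [HopfAlgebra k H] (a x : H) :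
    adjointAction k H (a ⊗ₜ x) =
      (toConv (LinearMap.mulRight k x) * toConv (antipode k)).ofConv a := by
  rw [(ℛ k a).convMul_apply, adjointAction]
  simp [← (ℛ k a).eq, TensorProduct.sum_tmul]

namespace BialgHom

variable {k A C : Type*} [CommSemiring k] [Semiring A] [Semiring C] [Bialgebra k A] [Bialgebra k C]

noncomputable def coaction (f : A →ₐc[k] C) : A →ₐ[k] A ⊗[k] C :=
  (Algebra.TensorProduct.map (AlgHom.id k A) (f : A →ₐ[k] C)).comp (Bialgebra.comulAlgHom k A)

lemma coaction_apply (f : A →ₐc[k] C) (a : A) :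
    f.coaction a = LinearMap.lTensor A (f : A →ₗ[k] C) (comul a) := by
  simp [coaction, ← (ℛ k a).eq]

lemma toConv_coaction (f : A →ₐc[k] C) :
    toConv f.coaction.toLinearMap =
      toConv (Algebra.TensorProduct.includeLeft : A →ₐ[k] A ⊗[k] C).toLinearMap *
        toConv (Algebra.TensorProduct.includeRight.comp (f : A →ₐ[k] C)).toLinearMap := by
  ext a
  simp [(ℛ k a).convMul_apply, coaction_apply, ← (ℛ k a).eq]

end BialgHom

theorem stmt_16_general {k A C : Type u} [Field k] [Ring A] [Ring C]
    [HopfAlgebra k A] [HopfAlgebra k C]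
    (f : A →ₐc[k] C)
    (HK : Set A)
    (hHK : HK = {x : A | LinearMap.lTensor A (f : A →ₗ[k] C) (Coalgebra.comul (R := k) x) =
      x ⊗ₜ[k] (1 : C)}) :
    ∀ a : A, ∀ x ∈ HK, adjointAction k A (a ⊗ₜ[k] x) ∈ HK := by
  subst hHK
  intro a x hx
  rw [Set.mem_ofPred_eq, ← BialgHom.coaction_apply] at hx ⊢
  rw [adjointAction_tmul]
  exact LinearMap.algHom_adjoint_eq_of_convMul_eq f.toConv_coaction hx
    (fun c => (Commute.one_right x).tmul (Commute.one_left (f c))) a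

theorem stmt_16 {k A C : Type u} [Field k] [Ring A] [Ring C]
    [HopfAlgebra k A] [HopfAlgebra k C]
    (hcocA : ∀ x : A, (TensorProduct.comm k A A) (Coalgebra.comul (R := k) x) =
      Coalgebra.comul (R := k) x)
    (hcocC : ∀ x : C, (TensorProduct.comm k C C) (Coalgebra.comul (R := k) x) =
      Coalgebra.comul (R := k) x)
    (f : A →ₐc[k] C)
    (HK : Set A)
    (hHK : HK = {x : A | LinearMap.lTensor A (f : A →ₗ[k] C) (Coalgebra.comul (R := k) x) =
      x ⊗ₜ[k] (1 : C)}) :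
    ∀ a : A, ∀ x ∈ HK, adjointAction k A (a ⊗ₜ[k] x) ∈ HK :=
  stmt_16_general f HK hHK
end
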